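/- arXiv:math/0103070 — 2 statements merged into one kernel-verified Lean document; each statement's English description precedes it below -/
import Mathlib

section
/- Let P̂⁰ be the 9×9 rank-one projector with entries 1/3 at positions (i,j), i,j ∈ {3,5,7}, and zero elsewhere, and let b be a root of b² + 3b + 1 = 0, i.e. b = (-3 ± √5)/2. Then R̂ = I + 3b·P̂⁰ satisfies the braid equation R̂₁₂R̂₂₃R̂₁₂ = R̂₂₃R̂₁₂R̂₂₃, where R̂₁₂ = R̂ ⊗ I₃ and R̂₂₃ = I₃ ⊗ R̂ are 27×27 matrices. -/
open Matrix Kronecker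

/-- The 9×9 real matrix with entries 1/3 at positions (i,j) for
i,j ∈ {3,5,7} (1-indexed) and 0 elsewhere. -/
noncomputable def P0 : Matrix (Fin 9) (Fin 9) ℝ :=
  Matrix.of fun i j =>
    if (i.val = 2 ∨ i.val = 4 ∨ i.val = 6) ∧ (j.val = 2 ∨ j.val = 4 ∨ j.val = 6)
    then 1 / 3 else 0

/-- Standard identification ℝ⁹ ⊗ ℝ³ ≅ ℝ²⁷. -/
def e93 : Fin 9 × Fin 3 ≃ Fin 27 := finProdFinEquiv.trans (finCongr (by norm_num))

/-- Standard identification ℝ³ ⊗ ℝ⁹ ≅ ℝ²⁷. -/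
def e39 : Fin 3 × Fin 9 ≃ Fin 27 := finProdFinEquiv.trans (finCongr (by norm_num))

/-!
Put `E₁ = 3 P̂⁰ ⊗ I₃` and `E₂ = I₃ ⊗ 3 P̂⁰`. These are Temperley–Lieb generators with loop value
`δ = 3`: `Eᵢ² = 3 Eᵢ` because `P̂⁰` is a projector, and `E₁ E₂ E₁ = E₁`, `E₂ E₁ E₂ = E₂` because the
image of `P̂⁰` is spanned by `e₃ + e₅ + e₇ = ∑ₐ eₐ ⊗ e₄₋ₐ ∈ ℝ³ ⊗ ℝ³`, whose coefficient matrix is a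
permutation matrix. For any such pair the two sides of the braid equation for `R̂ = 1 + b E` differ
by `b (b² + δ b + 1) (E₁ - E₂)`. The generators have integer entries, so the relations are checked
over `ℤ`, where the kernel can evaluate them.
-/

theorem braid_of_temperleyLieb {K A : Type*} [CommRing K] [Ring A] [Algebra K A] {E F : A}
    {δ b : K} (hE : E * E = δ • E) (hF : F * F = δ • F) (hEFE : E * F * E = E)
    (hFEF : F * E * F = F) (hb : b ^ 2 + δ * b + 1 = 0) :
    (1 + b • E) * (1 + b • F) * (1 + b • E) = (1 + b • F) * (1 + b • E) * (1 + b • F) := by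
  simp only [add_mul, mul_add, one_mul, mul_one, smul_mul_assoc, mul_smul_comm, hE, hF, hEFE,
    hFEF, smul_smul]
  linear_combination (norm := module) (b • hb) • (E - F)

def P0Int : Matrix (Fin 9) (Fin 9) ℤ :=
  Matrix.of fun i j =>
    if (i.val = 2 ∨ i.val = 4 ∨ i.val = 6) ∧ (j.val = 2 ∨ j.val = 4 ∨ j.val = 6)
    then 1 else 0

lemma three_smul_P0 : (3 : ℝ) • P0 = P0Int.map (Int.cast : ℤ → ℝ) := by
  ext i j
  simp only [P0, P0Int, of_apply, map_apply, Matrix.smul_apply, smul_eq_mul]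
  split_ifs <;> norm_num

lemma P0Int_mul_self : P0Int * P0Int = 3 • P0Int := by decide

def E12 : Matrix (Fin 27) (Fin 27) ℤ := reindex e93 e93 (P0Int ⊗ₖ 1)

def E23 : Matrix (Fin 27) (Fin 27) ℤ := reindex e39 e39 (1 ⊗ₖ P0Int)

lemma E12_mul_self : E12 * E12 = 3 • E12 := by
  rw [E12, ← coe_reindexAlgEquiv ℤ ℤ, ← map_mul, ← mul_kronecker_mul, P0Int_mul_self, mul_one,
    smul_kronecker, map_nsmul]

lemma E23_mul_self : E23 * E23 = 3 • E23 := by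
  rw [E23, ← coe_reindexAlgEquiv ℤ ℤ, ← map_mul, ← mul_kronecker_mul, P0Int_mul_self, mul_one,
    kronecker_smul, map_nsmul]

set_option maxRecDepth 20000 in
lemma E12_mul_E23_mul_E12 : E12 * E23 * E12 = E12 := by decide

set_option maxRecDepth 20000 in
lemma E23_mul_E12_mul_E23 : E23 * E12 * E23 = E23 := by decide

lemma reindex_kronecker_one (b : ℝ) :
    reindex e93 e93 ((1 + (3 * b) • P0) ⊗ₖ (1 : Matrix (Fin 3) (Fin 3) ℝ))
      = 1 + b • (Int.castRingHom ℝ).mapMatrix E12 := by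
  rw [mul_comm, ← smul_smul, three_smul_P0]
  ext i j
  simp [E12, one_apply, add_kronecker]

lemma reindex_one_kronecker (b : ℝ) :
    reindex e39 e39 ((1 : Matrix (Fin 3) (Fin 3) ℝ) ⊗ₖ (1 + (3 * b) • P0))
      = 1 + b • (Int.castRingHom ℝ).mapMatrix E23 := by
  rw [mul_comm, ← smul_smul, three_smul_P0]
  ext i j
  simp [E23, one_apply, kronecker_add]

theorem stmt_8 (b : ℝ) (hb : b ^ 2 + 3 * b + 1 = 0)
    (Rh : Matrix (Fin 9) (Fin 9) ℝ) (hRh : Rh = 1 + (3 * b) • P0)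
    (R12 R23 : Matrix (Fin 27) (Fin 27) ℝ)
    (h12 : R12 = Matrix.reindex e93 e93 (Rh ⊗ₖ (1 : Matrix (Fin 3) (Fin 3) ℝ)))
    (h23 : R23 = Matrix.reindex e39 e39 ((1 : Matrix (Fin 3) (Fin 3) ℝ) ⊗ₖ Rh)) :
    R12 * R23 * R12 = R23 * R12 * R23 := by
  subst hRh h12 h23
  rw [reindex_kronecker_one, reindex_one_kronecker]
  refine braid_of_temperleyLieb (δ := 3) ?_ ?_ ?_ ?_ hb
  · rw [← map_mul, E12_mul_self, map_nsmul, ← Nat.cast_smul_eq_nsmul ℝ, Nat.cast_ofNat]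
  · rw [← map_mul, E23_mul_self, map_nsmul, ← Nat.cast_smul_eq_nsmul ℝ, Nat.cast_ofNat]
  · rw [← map_mul, ← map_mul, E12_mul_E23_mul_E12]
  · rw [← map_mul, ← map_mul, E23_mul_E12_mul_E23]
end

section
/- For q a nonzero scalar with q² ≠ −1 and q³ ≠ 1, the formulas c₁ = v+v² + v²w q²/((q²+1)(q²+q+1)) + vw² q³/(q³−1)², c₂ = w+w² + w²v q(q²−q+1)/((q²+1)(q²+q+1)) − wv² q(q²−q+1)/(q²+1)² + w³q²/(q²+q+1)², and c₅ = (v/(q³−1)²)((q³−1)v+(q²+1)w)((q³−1)v−q(q²+1)w) all vanish at (v,w) = (−(1+q⁻²), −(1−q⁻³)) and at (v,w) = (−(1+q²), −(1−q³)). -/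
/-- Coefficient `c₁` from (6.78). -/
def c₁ {K : Type*} [Field K] (q v w : K) : K :=
  v + v ^ 2 + v ^ 2 * w * q ^ 2 / ((q ^ 2 + 1) * (q ^ 2 + q + 1))
    + v * w ^ 2 * q ^ 3 / (q ^ 3 - 1) ^ 2

/-- Coefficient `c₂` from (6.78). -/
def c₂ {K : Type*} [Field K] (q v w : K) : K :=
  w + w ^ 2 + w ^ 2 * v * q * (q ^ 2 - q + 1) / ((q ^ 2 + 1) * (q ^ 2 + q + 1))
    - w * v ^ 2 * q * (q ^ 2 - q + 1) / (q ^ 2 + 1) ^ 2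
    + w ^ 3 * q ^ 2 / (q ^ 2 + q + 1) ^ 2

/-- Coefficient `c₅` from (6.78). -/
def c₅ {K : Type*} [Field K] (q v w : K) : K :=
  v / (q ^ 3 - 1) ^ 2 * ((q ^ 3 - 1) * v + (q ^ 2 + 1) * w)
    * ((q ^ 3 - 1) * v - q * (q ^ 2 + 1) * w)


/-!
Every coefficient of `q` occurring in `c₁`, `c₂`, `c₅` is invariant under `q ↦ q⁻¹`, so
`cᵢ q v w = cᵢ q⁻¹ v w`. The first point is the second one with `q` replaced by `q⁻¹`, so it
suffices to check that `cᵢ` vanishes at `(v, w) = (-(1 + q²), q³ - 1)`. There `c₅` vanishes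
because its middle factor does, and `c₁`, `c₂` by clearing denominators.
-/

section

variable {K : Type*} [Field K] {q v w : K}

theorem div_eq_div_of_eq_mul {a b a' b' c : K} (hc : c ≠ 0) (ha : a = c * a') (hb : b = c * b') :
    a / b = a' / b' := by
  rw [ha, hb, mul_div_mul_left _ _ hc]

-- Junk values match: each denominator vanishes at `q⁻¹` iff it does at `q`.
theorem c₁_inv (hq : q ≠ 0) : c₁ q⁻¹ v w = c₁ q v w := by
  have hq' := inv_ne_zero hq
  unfold c₁
  congr 1
  · congr 1
    exact div_eq_div_of_eq_mul (pow_ne_zero 4 hq') (by field_simp) (by field_simp; ring)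
  · exact div_eq_div_of_eq_mul (pow_ne_zero 6 hq') (by field_simp) (by field_simp; ring)

theorem c₂_inv (hq : q ≠ 0) : c₂ q⁻¹ v w = c₂ q v w := by
  have hq' := inv_ne_zero hq
  unfold c₂
  congr 1
  · congr 1
    · congr 1
      exact div_eq_div_of_eq_mul (pow_ne_zero 4 hq') (by field_simp; ring) (by field_simp; ring)
    · exact div_eq_div_of_eq_mul (pow_ne_zero 4 hq') (by field_simp; ring) (by field_simp; ring)
  · exact div_eq_div_of_eq_mul (pow_ne_zero 4 hq') (by field_simp) (by field_simp; ring)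

theorem c₅_inv (hq : q ≠ 0) : c₅ q⁻¹ v w = c₅ q v w := by
  have hD : (q⁻¹ ^ 3 - 1) ^ 2 = q⁻¹ ^ 6 * (q ^ 3 - 1) ^ 2 := by field_simp; ring
  -- the two linear factors of `c₅` are exchanged
  have hX : (q⁻¹ ^ 3 - 1) * v + (q⁻¹ ^ 2 + 1) * w
      = -q⁻¹ ^ 3 * ((q ^ 3 - 1) * v - q * (q ^ 2 + 1) * w) := by field_simp; ring
  have hY : (q⁻¹ ^ 3 - 1) * v - q⁻¹ * (q⁻¹ ^ 2 + 1) * w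
      = -q⁻¹ ^ 3 * ((q ^ 3 - 1) * v + (q ^ 2 + 1) * w) := by field_simp; ring
  unfold c₅
  rw [hD, hX, hY]
  field_simp

theorem inv_sq_add_one_ne_zero (hq : q ≠ 0) (h : q ^ 2 + 1 ≠ 0) : q⁻¹ ^ 2 + 1 ≠ 0 := by
  rw [show q⁻¹ ^ 2 + 1 = q⁻¹ ^ 2 * (q ^ 2 + 1) by field_simp; ring]
  exact mul_ne_zero (pow_ne_zero 2 (inv_ne_zero hq)) h

theorem inv_pow_three_sub_one_ne_zero (hq : q ≠ 0) (h : q ^ 3 - 1 ≠ 0) : q⁻¹ ^ 3 - 1 ≠ 0 := by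
  rw [show q⁻¹ ^ 3 - 1 = -q⁻¹ ^ 3 * (q ^ 3 - 1) by field_simp; ring]
  exact mul_ne_zero (neg_ne_zero.2 (pow_ne_zero 3 (inv_ne_zero hq))) h

theorem inv_sq_add_inv_add_one_ne_zero (hq : q ≠ 0) (h : q ^ 2 + q + 1 ≠ 0) :
    q⁻¹ ^ 2 + q⁻¹ + 1 ≠ 0 := by
  rw [show q⁻¹ ^ 2 + q⁻¹ + 1 = q⁻¹ ^ 2 * (q ^ 2 + q + 1) by field_simp; ring]
  exact mul_ne_zero (pow_ne_zero 2 (inv_ne_zero hq)) h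

theorem c₁_eq_zero (hv : v = -(1 + q ^ 2)) (hw : w = -(1 - q ^ 3))
    (h1 : q ^ 2 + 1 ≠ 0) (h2 : q ^ 3 - 1 ≠ 0) (h3 : q ^ 2 + q + 1 ≠ 0) :
    c₁ q v w = 0 := by
  -- the form in which `field_simp` meets this denominator
  have h3' : q * (q + 1) + 1 ≠ 0 := by contrapose! h3; linear_combination h3
  subst hv hw
  unfold c₁
  field_simp
  ring

theorem c₂_eq_zero (hv : v = -(1 + q ^ 2)) (hw : w = -(1 - q ^ 3))
    (h1 : q ^ 2 + 1 ≠ 0) (h3 : q ^ 2 + q + 1 ≠ 0) : c₂ q v w = 0 := by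
  have h3' : q * (q + 1) + 1 ≠ 0 := by contrapose! h3; linear_combination h3
  subst hv hw
  unfold c₂
  field_simp
  ring

theorem c₅_eq_zero (hv : v = -(1 + q ^ 2)) (hw : w = -(1 - q ^ 3)) : c₅ q v w = 0 := by
  subst hv hw
  unfold c₅
  ring

end

theorem stmt_19 {K : Type*} [Field K] (q : K) (hq : q ≠ 0)
    (h1 : q ^ 2 + 1 ≠ 0) (h2 : q ^ 3 - 1 ≠ 0) (h3 : q ^ 2 + q + 1 ≠ 0)
    (v w : K)
    (h : (v = -(1 + q⁻¹ ^ 2) ∧ w = -(1 - q⁻¹ ^ 3)) ∨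
         (v = -(1 + q ^ 2) ∧ w = -(1 - q ^ 3))) :
    c₁ q v w = 0 ∧ c₂ q v w = 0 ∧ c₅ q v w = 0 := by
  rcases h with ⟨hv, hw⟩ | ⟨hv, hw⟩
  · have h1' := inv_sq_add_one_ne_zero hq h1
    have h2' := inv_pow_three_sub_one_ne_zero hq h2
    have h3' := inv_sq_add_inv_add_one_ne_zero hq h3
    rw [← c₁_inv hq, ← c₂_inv hq, ← c₅_inv hq]
    exact ⟨c₁_eq_zero hv hw h1' h2' h3', c₂_eq_zero hv hw h1' h3', c₅_eq_zero hv hw⟩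
  · exact ⟨c₁_eq_zero hv hw h1 h2 h3, c₂_eq_zero hv hw h1 h3, c₅_eq_zero hv hw⟩
end
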